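/- Let S be a finite set of binary strings with Σ_{p∈S} 2^(−|p|) = Ω ≤ 1, and suppose |S| ≤ Ω·N for a real N ≥ 1. Then Σ_{p∈S} |p| · 2^(−|p|) ≤ Ω·log₂(N). -/

import Mathlib

/-!
With `w = 2^(-|p|)` the summand `|p| · w` is `-w log₂ w`, so the claim bounds the entropy of the
unnormalized distribution `w` by `Ω log₂ N`. Termwise, `log y ≤ y - 1` at `y = 1 / (w N)` gives
`-w log₂ w ≤ w log₂ N + (1/N - w) / ln 2`; summing, the correction `(|S|/N - Ω) / ln 2` is
nonpositive precisely because `|S| ≤ Ω N`.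
-/

open Real Finset

lemma neg_mul_logb_le {b x N : ℝ} (hb : 1 < b) (hx : 0 < x) (hN : 0 < N) :
    -x * logb b x ≤ x * logb b N + (1 / N - x) / log b := by
  have hlogb : 0 < log b := log_pos hb
  have key : x * (-log x - log N) ≤ 1 / N - x := by
    have h := mul_le_mul_of_nonneg_left
      (log_le_sub_one_of_pos (show 0 < 1 / (x * N) by positivity)) hx.le
    rw [one_div, log_inv, log_mul hx.ne' hN.ne'] at h
    calc x * (-log x - log N) = x * -(log x + log N) := by ring
      _ ≤ x * ((x * N)⁻¹ - 1) := h
      _ = 1 / N - x := by field_simp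
  calc -x * logb b x = (x * log N + x * (-log x - log N)) / log b := by rw [logb]; ring
    _ ≤ (x * log N + (1 / N - x)) / log b := by gcongr
    _ = x * logb b N + (1 / N - x) / log b := by rw [logb]; ring

theorem sum_neg_mul_logb_le {ι : Type*} (s : Finset ι) (w : ι → ℝ) {b N : ℝ} (hb : 1 < b)
    (hw : ∀ i ∈ s, 0 < w i) (hN : 0 < N) (hcard : (#s : ℝ) ≤ (∑ i ∈ s, w i) * N) :
    ∑ i ∈ s, -w i * logb b (w i) ≤ (∑ i ∈ s, w i) * logb b N := by
  have hcorr : ((#s : ℝ) / N - ∑ i ∈ s, w i) / log b ≤ 0 :=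
    div_nonpos_of_nonpos_of_nonneg (by rw [sub_nonpos, div_le_iff₀ hN]; exact hcard)
      (log_pos hb).le
  calc ∑ i ∈ s, -w i * logb b (w i)
      ≤ ∑ i ∈ s, (w i * logb b N + (1 / N - w i) / log b) :=
        sum_le_sum fun i hi => neg_mul_logb_le hb (hw i hi) hN
    _ = (∑ i ∈ s, w i) * logb b N + ((#s : ℝ) / N - ∑ i ∈ s, w i) / log b := by
        rw [sum_add_distrib, ← sum_mul, ← sum_div, sum_sub_distrib, sum_const, nsmul_eq_mul,
          mul_one_div]
    _ ≤ (∑ i ∈ s, w i) * logb b N := by linarith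

theorem stmt_6_general (S : Finset (List Bool)) (Ω : ℝ)
    (hΩ : Ω = ∑ p ∈ S, (2 : ℝ) ^ (-(p.length : ℝ)))
    (N : ℝ) (hN : 1 ≤ N) (hcard : (S.card : ℝ) ≤ Ω * N) :
    ∑ p ∈ S, (p.length : ℝ) * (2 : ℝ) ^ (-(p.length : ℝ)) ≤ Ω * Real.logb 2 N := by
  have hlen (p : List Bool) : (p.length : ℝ) * (2 : ℝ) ^ (-(p.length : ℝ))
      = -(2 : ℝ) ^ (-(p.length : ℝ)) * logb 2 ((2 : ℝ) ^ (-(p.length : ℝ))) := by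
    rw [logb_rpow two_pos (by norm_num)]; ring
  simp only [hlen]
  subst hΩ
  exact sum_neg_mul_logb_le S _ one_lt_two (fun p _ => by positivity) (by linarith) hcard

/-- Lemma 4 of the paper: weighted average program length over the halting set
is at most Ω·log₂ N. -/
theorem stmt_6 (S : Finset (List Bool)) (Ω : ℝ)
    (hΩ : Ω = ∑ p ∈ S, (2 : ℝ) ^ (-(p.length : ℝ))) (hΩ1 : Ω ≤ 1)
    (N : ℝ) (hN : 1 ≤ N) (hcard : (S.card : ℝ) ≤ Ω * N) :
    ∑ p ∈ S, (p.length : ℝ) * (2 : ℝ) ^ (-(p.length : ℝ)) ≤ Ω * Real.logb 2 N :=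
  stmt_6_general S Ω hΩ N hN hcard
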